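/- arXiv:2506.24076 — 2 statements merged into one kernel-verified Lean document; each statement's English description precedes it below -/
import Mathlib

section
/- Let H be a real Hilbert space, let μ, L ∈ ℝ with μ < L and L > 0, and let f : H → ℝ be Fréchet differentiable such that x ↦ f(x) − (μ/2)‖x‖² is convex and x ↦ (L/2)‖x‖² − f(x) is convex. Then for all x, y ∈ H, f(x) ≥ f(y) + ⟨∇f(y), x − y⟩ + (μ/2)‖x − y‖² + (1/(2(L−μ)))‖∇f(x) − ∇f(y) − μ(x − y)‖². -/
/-!
Subtracting `(μ/2)‖·‖²` reduces everything to `μ = 0`: `h = f - (μ/2)‖·‖²` has gradient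
`g - μ • id`, is convex, and `((L - μ)/2)‖·‖² - h` is convex. For such an `h` with `ℓ = L - μ`,
evaluate at `z = x - ℓ⁻¹ • (∇h x - ∇h y)` both the tangent lower bound of `h` at `y` and the
quadratic upper bound `h z ≤ h x + ⟪∇h x, z - x⟫ + (ℓ/2)‖z - x‖²` (itself the tangent inequality of
the convex function `(ℓ/2)‖·‖² - h` at `x`); comparing the two gives
`h x ≥ h y + ⟪∇h y, x - y⟫ + ‖∇h x - ∇h y‖² / (2ℓ)`, which is the claim after expanding `h`.
-/

open scoped RealInnerProductSpace

theorem ConvexOn.add_fderiv_sub_le {E : Type*} [NormedAddCommGroup E] [NormedSpace ℝ E]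
    {s : Set E} {φ : E → ℝ} {φ' : E →L[ℝ] ℝ} {y z : E} (hφ : ConvexOn ℝ s φ) (hy : y ∈ s)
    (hz : z ∈ s) (hφ' : HasFDerivAt φ φ' y) : φ y + φ' (z - y) ≤ φ z := by
  let ℓ : ℝ →ᵃ[ℝ] E := AffineMap.lineMap y z
  have hderiv : HasDerivAt (φ ∘ ℓ) (φ' (z - y)) 0 := by
    refine HasFDerivAt.comp_hasDerivAt (l := φ) 0 ?_ AffineMap.hasDerivAt_lineMap
    simpa [ℓ] using hφ'
  have hslope := (hφ.comp_affineMap ℓ).le_slope_of_hasDerivAt (by simpa [ℓ]) (by simpa [ℓ])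
    one_pos hderiv
  simp only [slope_def_field, Function.comp_apply, ℓ, AffineMap.lineMap_apply_zero,
    AffineMap.lineMap_apply_one, sub_zero, div_one] at hslope
  linarith

section Gradient

variable {H : Type*} [NormedAddCommGroup H] [InnerProductSpace ℝ H] [CompleteSpace H]

theorem ConvexOn.add_inner_sub_le {s : Set H} {φ : H → ℝ} {y z ψ : H} (hφ : ConvexOn ℝ s φ)
    (hy : y ∈ s) (hz : z ∈ s) (hψ : HasGradientAt φ ψ y) : φ y + ⟪ψ, z - y⟫ ≤ φ z := by
  simpa using hφ.add_fderiv_sub_le hy hz (hasGradientAt_iff_hasFDerivAt.mp hψ)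

theorem HasGradientAt.sub {φ χ : H → ℝ} {φ' χ' x : H} (hφ : HasGradientAt φ φ' x)
    (hχ : HasGradientAt χ χ' x) : HasGradientAt (fun x => φ x - χ x) (φ' - χ') x := by
  rw [hasGradientAt_iff_hasFDerivAt, map_sub]
  exact (hasGradientAt_iff_hasFDerivAt.mp hφ).sub (hasGradientAt_iff_hasFDerivAt.mp hχ)

theorem hasGradientAt_half_mul_norm_sq (c : ℝ) (x : H) :
    HasGradientAt (fun x => c / 2 * ‖x‖ ^ 2) (c • x) x := by
  rw [hasGradientAt_iff_hasFDerivAt]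
  refine (((hasStrictFDerivAt_norm_sq x).hasFDerivAt).const_mul (c / 2)).congr_fderiv ?_
  ext v
  simp only [smul_apply, coe_innerSL_apply, nsmul_eq_mul, Nat.cast_ofNat, smul_eq_mul,
    map_smul, InnerProductSpace.toDual_apply_apply]
  ring

theorem le_add_inner_add_norm_sq_of_convexOn_sub {ℓ : ℝ} {φ : H → ℝ} {x ψ : H}
    (hφ : ConvexOn ℝ Set.univ (fun x => ℓ / 2 * ‖x‖ ^ 2 - φ x)) (hψ : HasGradientAt φ ψ x)
    (z : H) : φ z ≤ φ x + ⟪ψ, z - x⟫ + ℓ / 2 * ‖z - x‖ ^ 2 := by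
  have h := hφ.add_inner_sub_le (Set.mem_univ x) (Set.mem_univ z)
    ((hasGradientAt_half_mul_norm_sq ℓ x).sub hψ)
  rw [inner_sub_left, real_inner_smul_left, inner_sub_right, real_inner_self_eq_norm_sq,
    real_inner_comm] at h
  rw [norm_sub_sq_real]
  linarith

theorem ConvexOn.add_inner_add_norm_sq_gradient_sub_le {ℓ : ℝ} (hℓ : 0 < ℓ) {φ : H → ℝ}
    {ψ : H → H} (hψ : ∀ x, HasGradientAt φ (ψ x) x) (hφ : ConvexOn ℝ Set.univ φ)
    (hφℓ : ConvexOn ℝ Set.univ (fun x => ℓ / 2 * ‖x‖ ^ 2 - φ x)) (x y : H) :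
    φ y + ⟪ψ y, x - y⟫ + 1 / (2 * ℓ) * ‖ψ x - ψ y‖ ^ 2 ≤ φ x := by
  set d := ψ x - ψ y
  set z := x - ℓ⁻¹ • d
  have hlower : φ y + ⟪ψ y, x - y⟫ - ℓ⁻¹ * ⟪ψ y, d⟫ ≤ φ z := by
    have h := hφ.add_inner_sub_le (Set.mem_univ y) (Set.mem_univ z) (hψ y)
    rwa [sub_right_comm, inner_sub_right, real_inner_smul_right, ← add_sub_assoc] at h
  have hupper : φ z ≤ φ x - ℓ⁻¹ * ⟪ψ x, d⟫ + 1 / (2 * ℓ) * ‖d‖ ^ 2 := by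
    have h := le_add_inner_add_norm_sq_of_convexOn_sub hφℓ (hψ x) z
    rw [sub_sub_cancel_left, inner_neg_right, real_inner_smul_right, norm_neg, norm_smul,
      norm_inv, Real.norm_of_nonneg hℓ.le, ← sub_eq_add_neg] at h
    convert h using 2
    field_simp
  have hd : ⟪ψ x, d⟫ - ⟪ψ y, d⟫ = ‖d‖ ^ 2 := by
    rw [← inner_sub_left, real_inner_self_eq_norm_sq]
  linear_combination hlower + hupper - ℓ⁻¹ * hd

end Gradient

theorem smooth_strongly_convex_two_point_inequality_general
    {H : Type*} [NormedAddCommGroup H] [InnerProductSpace ℝ H] [CompleteSpace H]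
    (μ L : ℝ) (hμL : μ < L)
    (f : H → ℝ) (g : H → H)
    (hdiff : ∀ x, HasGradientAt f (g x) x)
    (hconv₁ : ConvexOn ℝ Set.univ (fun x => f x - μ / 2 * ‖x‖ ^ 2))
    (hconv₂ : ConvexOn ℝ Set.univ (fun x => L / 2 * ‖x‖ ^ 2 - f x)) :
    ∀ x y : H, f x ≥ f y + ⟪g y, x - y⟫ + μ / 2 * ‖x - y‖ ^ 2 +
      1 / (2 * (L - μ)) * ‖g x - g y - μ • (x - y)‖ ^ 2 := by
  intro x y
  have hgrad : ∀ x, HasGradientAt (fun x => f x - μ / 2 * ‖x‖ ^ 2) (g x - μ • x) x :=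
    fun x => (hdiff x).sub (hasGradientAt_half_mul_norm_sq μ x)
  have hconv : ConvexOn ℝ Set.univ
      (fun x => (L - μ) / 2 * ‖x‖ ^ 2 - (f x - μ / 2 * ‖x‖ ^ 2)) := by
    convert hconv₂ using 2
    ring
  have key := hconv₁.add_inner_add_norm_sq_gradient_sub_le (sub_pos.mpr hμL) hgrad hconv x y
  have hψ : g x - μ • x - (g y - μ • y) = g x - g y - μ • (x - y) := by
    rw [smul_sub]
    abel
  rw [hψ, inner_sub_left (g y), real_inner_smul_left, inner_sub_right y x y,
    real_inner_self_eq_norm_sq, real_inner_comm x y] at key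
  rw [norm_sub_sq_real x y]
  linarith

/-- Necessity direction of the interpolation theorem for `F_{μ,L}(H)`:
the two-point inequality satisfied by smooth strongly/weakly convex functions. -/
theorem smooth_strongly_convex_two_point_inequality
    {H : Type*} [NormedAddCommGroup H] [InnerProductSpace ℝ H] [CompleteSpace H]
    (μ L : ℝ) (hμL : μ < L) (hL : 0 < L)
    (f : H → ℝ) (g : H → H)
    (hdiff : ∀ x, HasGradientAt f (g x) x)
    (hconv₁ : ConvexOn ℝ Set.univ (fun x => f x - μ / 2 * ‖x‖ ^ 2))
    (hconv₂ : ConvexOn ℝ Set.univ (fun x => L / 2 * ‖x‖ ^ 2 - f x)) :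
    ∀ x y : H, f x ≥ f y + ⟪g y, x - y⟫ + μ / 2 * ‖x - y‖ ^ 2 +
      1 / (2 * (L - μ)) * ‖g x - g y - μ • (x - y)‖ ^ 2 :=
  smooth_strongly_convex_two_point_inequality_general μ L hμL f g hdiff hconv₁ hconv₂
end

section
/- Let H be a real Hilbert space, let L > 0, and let {(y_i, u_i)}_{i ∈ J} be a family of pairs in H × H. Then the following are equivalent: (i) there exists an L-Lipschitz continuous map G : H → H with G(y_i) = u_i for every i ∈ J; (ii) for all i, j ∈ J, ‖u_i − u_j‖ ≤ L‖y_i − y_j‖. -/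
/-!
Necessity is immediate. For sufficiency, Zorn's lemma reduces the extension problem to adding one
point `x` to a Lipschitz graph `M`, i.e. to finding `v` in the intersection of the closed balls
`B(q, ‖L • (x - p)‖)`, `(p, q) ∈ M`: a family of balls whose centres are no farther apart than the
vectors giving their radii.

For finitely many such balls `B(u i, ‖b i‖)`, let `z` minimise the largest excess
`‖z - u i‖ - ‖b i‖` over the convex hull of the centres. Moving from `z` towards the nearest point
of the hull of the centres where the excess is maximal would lower it, so `z` lies in that hull;
writing `z = ∑ w k • u k`, the variance identity gives `∑ w k * ‖z - u k‖ ^ 2 ≤ ∑ w k * ‖b k‖ ^ 2`,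
so the maximal excess is `≤ 0`. For infinitely many balls, the minimal-norm points `v s` of the
finite intersections satisfy `‖v s - v t‖ ^ 2 ≤ ‖v t‖ ^ 2 - ‖v s‖ ^ 2` for `s ⊆ t`, hence form a
Cauchy net whose limit lies in every ball.
-/

open Filter Topology Set

section

variable {H : Type*} [NormedAddCommGroup H] [InnerProductSpace ℝ H] {ι κ : Type*}

theorem sum_sum_mul_norm_sub_sq [Fintype κ] (w : κ → ℝ) (hw : ∑ k, w k = 1) (P : κ → H) :
    ∑ k, ∑ l, w k * w l * ‖P k - P l‖ ^ 2
      = 2 * ∑ k, w k * ‖P k‖ ^ 2 - 2 * ‖∑ k, w k • P k‖ ^ 2 := by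
  have hcross : ‖∑ k, w k • P k‖ ^ 2 = ∑ k, ∑ l, w k * w l * inner ℝ (P k) (P l) := by
    simp_rw [← real_inner_self_eq_norm_sq, sum_inner, inner_sum, real_inner_smul_left,
      real_inner_smul_right]
    simp only [mul_assoc]
  have hleft : ∑ k, ∑ l, w k * w l * ‖P k‖ ^ 2 = ∑ k, w k * ‖P k‖ ^ 2 := by
    simp only [mul_right_comm (w _) (w _), ← Finset.mul_sum, hw, mul_one]
  have hright : ∑ k, ∑ l, w k * w l * ‖P l‖ ^ 2 = ∑ k, w k * ‖P k‖ ^ 2 := by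
    rw [Finset.sum_comm]
    simp only [← Finset.sum_mul, hw, one_mul]
  have hexpand : ∀ k l, w k * w l * ‖P k - P l‖ ^ 2 = w k * w l * ‖P k‖ ^ 2
      + w k * w l * ‖P l‖ ^ 2 - 2 * (w k * w l * inner ℝ (P k) (P l)) := fun k l => by
    rw [norm_sub_sq_real]; ring
  simp only [hexpand, Finset.sum_sub_distrib, Finset.sum_add_distrib, ← Finset.mul_sum, hleft,
    hright, hcross]
  ring

theorem sum_mul_norm_sub_sq_le_of_norm_sub_le [Fintype κ] (w : κ → ℝ) (hw₀ : ∀ k, 0 ≤ w k)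
    (hw₁ : ∑ k, w k = 1) {x y : κ → H} (h : ∀ k l, ‖x k - x l‖ ≤ ‖y k - y l‖) :
    ∑ k, w k * ‖∑ l, w l • x l - x k‖ ^ 2 ≤ ∑ k, w k * ‖y k‖ ^ 2 := by
  set z := ∑ l, w l • x l
  have hcentre : ∑ k, w k • (x k - z) = 0 := by
    simp only [smul_sub, Finset.sum_sub_distrib, ← Finset.sum_smul, hw₁, one_smul, z, sub_self]
  have hx := sum_sum_mul_norm_sub_sq w hw₁ fun k => x k - z
  have hy := sum_sum_mul_norm_sub_sq w hw₁ y
  have hle : ∑ k, ∑ l, w k * w l * ‖(x k - z) - (x l - z)‖ ^ 2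
      ≤ ∑ k, ∑ l, w k * w l * ‖y k - y l‖ ^ 2 := by
    gcongr with k _ l _
    · exact mul_nonneg (hw₀ k) (hw₀ l)
    · rw [sub_sub_sub_cancel_right]
      exact h k l
  simp only [hcentre, norm_zero, norm_sub_rev (x _) z] at hx
  nlinarith [sq_nonneg ‖∑ k, w k • y k‖]

theorem exists_norm_sub_le_of_mem_convexHull {A : Set ι} {x y : ι → H}
    (h : ∀ i ∈ A, ∀ j ∈ A, ‖x i - x j‖ ≤ ‖y i - y j‖) {z : H}
    (hz : z ∈ convexHull ℝ (x '' A)) : ∃ i ∈ A, ‖z - x i‖ ≤ ‖y i‖ := by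
  obtain ⟨κ, _, w, p, hw₀, hw₁, hp, rfl⟩ := mem_convexHull_iff_exists_fintype.1 hz
  choose q hqA hq using hp
  obtain rfl : p = x ∘ q := funext fun k => (hq k).symm
  have hle := sum_mul_norm_sub_sq_le_of_norm_sub_le w hw₀ hw₁ (x := x ∘ q) (y := y ∘ q)
    fun k l => h _ (hqA k) _ (hqA l)
  by_contra! hlt
  obtain ⟨k, -, hk⟩ := Finset.exists_ne_zero_of_sum_ne_zero (hw₁ ▸ one_ne_zero)
  refine hle.not_gt (Finset.sum_lt_sum (fun l _ => ?_) ⟨k, Finset.mem_univ k, ?_⟩)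
  · gcongr
    · exact hw₀ l
    · exact (hlt _ (hqA l)).le
  · gcongr
    · exact (hw₀ k).lt_of_ne' hk
    · exact hlt _ (hqA k)

theorem norm_add_smul_sub_sub_lt_of_inner_nonpos {z c x : H} (hzc : z ≠ c)
    (hx : inner ℝ (z - c) (x - c) ≤ 0) {t : ℝ} (ht₀ : 0 < t) (ht₁ : t ≤ 1) :
    ‖z + t • (c - z) - x‖ < ‖z - x‖ := by
  have hd : 0 < ‖z - c‖ := norm_pos_iff.2 (sub_ne_zero.2 hzc)
  have he : 0 ≤ inner ℝ (z - c) (c - x) := by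
    rw [← neg_sub x c, inner_neg_right]; linarith
  have hnew : z + t • (c - z) - x = (1 - t) • (z - c) + (c - x) := by module
  have hold : z - x = (z - c) + (c - x) := by abel
  rw [← sq_lt_sq₀ (norm_nonneg _) (norm_nonneg _), hnew, hold, norm_add_sq_real,
    norm_add_sq_real, norm_smul, real_inner_smul_left, Real.norm_of_nonneg (by linarith)]
  nlinarith [mul_pos (mul_pos ht₀ (by linarith : 0 < 2 - t)) (pow_pos hd 2), mul_nonneg ht₀.le he]

theorem mem_convexHull_of_isMinOn_sup' {s : Finset ι} (hs : s.Nonempty) (u : ι → H) (r : ι → ℝ)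
    {C : Set H} (hC : Convex ℝ C) (huC : ∀ i ∈ s, u i ∈ C) {z : H} (hzC : z ∈ C)
    (hmin : IsMinOn (fun x => s.sup' hs fun i => ‖x - u i‖ - r i) C z) :
    z ∈ convexHull ℝ
      (u '' ↑{i ∈ s | ‖z - u i‖ - r i = s.sup' hs fun i => ‖z - u i‖ - r i}) := by
  set m := s.sup' hs fun i => ‖z - u i‖ - r i
  set K := convexHull ℝ (u '' ↑{i ∈ s | ‖z - u i‖ - r i = m})
  by_contra hzK
  have hKc : IsCompact K := ((Finset.finite_toSet _).image u).isCompact_convexHull (𝕜 := ℝ)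
  have hKne : K.Nonempty := by
    obtain ⟨i, hi, him⟩ := s.exists_mem_eq_sup' hs fun i => ‖z - u i‖ - r i
    exact ⟨u i, subset_convexHull ℝ _ ⟨i, Finset.mem_filter.2 ⟨hi, him.symm⟩, rfl⟩⟩
  obtain ⟨c, hcK, hc⟩ :=
    exists_norm_eq_iInf_of_complete_convex hKne hKc.isComplete (convex_convexHull ℝ _) z
  have hproj := (norm_eq_iInf_iff_real_inner_le_zero (convex_convexHull ℝ _) hcK).1 hc
  have hzc : z ≠ c := fun h => hzK (h ▸ hcK)
  have hdecr : ∀ᶠ t in 𝓝[>] (0 : ℝ), ∀ i ∈ s, ‖z + t • (c - z) - u i‖ - r i < m := by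
    refine (eventually_all_finset s).2 fun i hi => ?_
    by_cases hiA : ‖z - u i‖ - r i = m
    · filter_upwards [Ioc_mem_nhdsGT one_pos] with t ht
      have := norm_add_smul_sub_sub_lt_of_inner_nonpos hzc
        (hproj _ (subset_convexHull ℝ _ ⟨i, Finset.mem_filter.2 ⟨hi, hiA⟩, rfl⟩)) ht.1 ht.2
      linarith
    · have hcont : Tendsto (fun t : ℝ => ‖z + t • (c - z) - u i‖ - r i) (𝓝[>] 0)
          (𝓝 (‖z - u i‖ - r i)) := by
        refine tendsto_nhdsWithin_of_tendsto_nhds ?_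
        exact (by fun_prop : Continuous fun t : ℝ => ‖z + t • (c - z) - u i‖ - r i).tendsto' 0 _
          (by simp)
      exact hcont.eventually
        (gt_mem_nhds ((s.le_sup' (fun i => ‖z - u i‖ - r i) hi).lt_of_ne hiA))
  obtain ⟨t, hlt, ht⟩ := (hdecr.and (Ioc_mem_nhdsGT one_pos)).exists
  have hzt : z + t • (c - z) ∈ C :=
    hC.add_smul_sub_mem hzC
      (convexHull_min (by rintro _ ⟨i, hi, rfl⟩; exact huC i (Finset.mem_filter.1 hi).1) hC hcK)
      ⟨ht.1.le, ht.2⟩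
  exact (hmin hzt).not_gt ((Finset.sup'_lt_iff hs).2 hlt)

theorem exists_forall_norm_sub_le_of_finset (s : Finset ι) (u b : ι → H)
    (h : ∀ i ∈ s, ∀ j ∈ s, ‖u i - u j‖ ≤ ‖b i - b j‖) :
    ∃ z, ∀ i ∈ s, ‖z - u i‖ ≤ ‖b i‖ := by
  rcases s.eq_empty_or_nonempty with rfl | hs
  · simp
  obtain ⟨z, hzC, hmin⟩ := ((s.finite_toSet.image u).isCompact_convexHull (𝕜 := ℝ)).exists_isMinOn
    ((s.coe_nonempty.2 hs).image u).convexHull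
    (Continuous.continuousOn (f := fun x => s.sup' hs fun i => ‖x - u i‖ - ‖b i‖) (by fun_prop))
  obtain ⟨j, hj, hjb⟩ := exists_norm_sub_le_of_mem_convexHull
    (fun i hi j hj => h i (Finset.mem_filter.1 hi).1 j (Finset.mem_filter.1 hj).1)
    (mem_convexHull_of_isMinOn_sup' hs u (fun i => ‖b i‖) (convex_convexHull ℝ _)
      (fun i hi => subset_convexHull ℝ _ (Set.mem_image_of_mem u hi)) hzC hmin)
  refine ⟨z, fun i hi => ?_⟩
  linarith [s.le_sup' (fun i => ‖z - u i‖ - ‖b i‖) hi, (Finset.mem_filter.1 hj).2]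

theorem exists_mem_forall_norm_sub_sq_le [CompleteSpace H] {K : Set H} (hne : K.Nonempty)
    (hconv : Convex ℝ K) (hclosed : IsClosed K) :
    ∃ v ∈ K, ∀ y ∈ K, ‖v - y‖ ^ 2 ≤ ‖y‖ ^ 2 - ‖v‖ ^ 2 := by
  obtain ⟨v, hvK, hv⟩ := exists_norm_eq_iInf_of_complete_convex hne hclosed.isComplete hconv 0
  refine ⟨v, hvK, fun y hy => ?_⟩
  have hinner := (norm_eq_iInf_iff_real_inner_le_zero hconv hvK).1 hv y hy
  rw [zero_sub, inner_neg_left, neg_nonpos] at hinner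
  have hy : y = v + (y - v) := by abel
  rw [hy, norm_add_sq_real, norm_sub_rev, ← hy]
  linarith

theorem nonempty_iInter_of_antitone_of_convex [CompleteSpace H] {β : Type*} [SemilatticeSup β]
    [Nonempty β] {K : β → Set H} (hK : Antitone K) (hne : ∀ b, (K b).Nonempty)
    (hconv : ∀ b, Convex ℝ (K b)) (hclosed : ∀ b, IsClosed (K b)) {b₀ : β}
    (hbdd : Bornology.IsBounded (K b₀)) : (⋂ b, K b).Nonempty := by
  choose x hxK hx using fun b => exists_mem_forall_norm_sub_sq_le (hne b) (hconv b) (hclosed b)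
  have hmono : Monotone fun b => ‖x b‖ ^ 2 := fun a b hab => by
    linarith [hx a _ (hK hab (hxK b)), sq_nonneg ‖x a - x b‖]
  obtain ⟨R, hR⟩ := hbdd.subset_closedBall 0
  have hbddAbove : BddAbove (range fun b => ‖x b‖ ^ 2) := by
    refine ⟨R ^ 2, forall_mem_range.2 fun b => (hmono (le_sup_left (b := b₀))).trans ?_⟩
    have := hR (hK le_sup_right (hxK (b ⊔ b₀)))
    rw [mem_closedBall_zero_iff] at this
    exact pow_le_pow_left₀ (norm_nonneg _) this 2
  have hcauchy : CauchySeq x := by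
    refine Metric.cauchySeq_iff'.2 fun ε hε => ?_
    obtain ⟨_, ⟨N, rfl⟩, hN⟩ :=
      exists_lt_of_lt_csSup (range_nonempty _) (sub_lt_self (⨆ b, ‖x b‖ ^ 2) (pow_pos hε 2))
    refine ⟨N, fun n hn => ?_⟩
    have := hx N _ (hK hn (hxK n))
    have := le_ciSup hbddAbove n
    rw [dist_eq_norm, norm_sub_rev]
    exact lt_of_pow_lt_pow_left₀ 2 hε.le (by linarith)
  obtain ⟨z, hz⟩ := cauchySeq_tendsto_of_complete hcauchy
  exact ⟨z, mem_iInter.2 fun b =>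
    (hclosed b).mem_of_tendsto hz (eventually_atTop.2 ⟨b, fun n hn => hK hn (hxK n)⟩)⟩

theorem exists_forall_norm_sub_le [CompleteSpace H] (u b : ι → H)
    (h : ∀ i j, ‖u i - u j‖ ≤ ‖b i - b j‖) : ∃ z, ∀ i, ‖z - u i‖ ≤ ‖b i‖ := by
  classical
  rcases isEmpty_or_nonempty ι with hι | ⟨⟨i₀⟩⟩
  · exact ⟨0, fun i => isEmptyElim i⟩
  set K : Finset ι → Set H := fun s => ⋂ i ∈ s, Metric.closedBall (u i) ‖b i‖
  have hK : Antitone K := fun s t hst => biInter_subset_biInter_left hst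
  have hne : ∀ s, (K s).Nonempty := fun s => by
    obtain ⟨z, hz⟩ := exists_forall_norm_sub_le_of_finset s u b fun i _ j _ => h i j
    exact ⟨z, mem_iInter₂.2 fun i hi => by simpa [dist_eq_norm] using hz i hi⟩
  obtain ⟨z, hz⟩ := nonempty_iInter_of_antitone_of_convex hK hne
    (fun s => convex_iInter₂ fun i _ => convex_closedBall _ _)
    (fun s => isClosed_biInter fun i _ => Metric.isClosed_closedBall)
    (b₀ := {i₀}) (by simpa [K] using Metric.isBounded_closedBall)
  exact ⟨z, fun i => by simpa [K, dist_eq_norm] using mem_iInter.1 hz {i}⟩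

end

def IsLipschitzGraph {E : Type*} [SeminormedAddCommGroup E] (L : ℝ) (M : Set (E × E)) : Prop :=
  ∀ p ∈ M, ∀ q ∈ M, ‖p.2 - q.2‖ ≤ L * ‖p.1 - q.1‖

namespace IsLipschitzGraph

variable {E : Type*} [SeminormedAddCommGroup E] {L : ℝ}

theorem sUnion {c : Set (Set (E × E))} (hc : ∀ M ∈ c, IsLipschitzGraph L M)
    (hchain : IsChain (· ⊆ ·) c) : IsLipschitzGraph L (⋃₀ c) := by
  rintro p ⟨M, hM, hp⟩ q ⟨N, hN, hq⟩
  rcases hchain.total hM hN with hMN | hNM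
  · exact hc N hN p (hMN hp) q hq
  · exact hc M hM p hp q (hNM hq)

variable {H : Type*} [NormedAddCommGroup H] [InnerProductSpace ℝ H] [CompleteSpace H]

theorem exists_insert (hL : 0 ≤ L) {M : Set (H × H)}
    (hM : IsLipschitzGraph L M) (x : H) : ∃ v, IsLipschitzGraph L (insert (x, v) M) := by
  have hnorm : ∀ a : H, ‖L • a‖ = L * ‖a‖ := fun a => by
    rw [norm_smul, Real.norm_of_nonneg hL]
  obtain ⟨v, hv⟩ := exists_forall_norm_sub_le (fun p : M => p.1.2) (fun p => L • (x - p.1.1))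
    fun p q => by
      rw [← smul_sub, sub_sub_sub_cancel_left, hnorm, norm_sub_rev]
      exact hM _ q.2 _ p.2
  simp only [hnorm] at hv
  refine ⟨v, ?_⟩
  rintro p (rfl | hp) q (rfl | hq)
  · simp
  · exact hv ⟨q, hq⟩
  · rw [norm_sub_rev, norm_sub_rev p.1]
    exact hv ⟨p, hp⟩
  · exact hM p hp q hq

theorem exists_lipschitz_extension (hL : 0 ≤ L) {M : Set (H × H)}
    (hM : IsLipschitzGraph L M) :
    ∃ G : H → H, (∀ x z, ‖G x - G z‖ ≤ L * ‖x - z‖) ∧ ∀ p ∈ M, G p.1 = p.2 := by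
  obtain ⟨N, hMN, hN⟩ := zorn_subset_nonempty {N | IsLipschitzGraph L N}
    (fun c hc hchain _ => ⟨⋃₀ c, sUnion hc hchain, fun _ => subset_sUnion_of_mem⟩) M hM
  have htotal : ∀ x, ∃ v, (x, v) ∈ N := fun x => by
    obtain ⟨v, hv⟩ := hN.prop.exists_insert hL x
    exact ⟨v, hN.2 hv (subset_insert _ _) (mem_insert _ _)⟩
  choose G hG using htotal
  refine ⟨G, fun x z => hN.prop _ (hG x) _ (hG z), fun p hp => ?_⟩
  have := hN.prop _ (hMN hp) _ (hG p.1)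
  rw [sub_self, norm_zero, mul_zero, norm_le_zero_iff, sub_eq_zero] at this
  exact this.symm

end IsLipschitzGraph

/-- Interpolation theorem for `L`-Lipschitz continuous operators on a real Hilbert
space (the nontrivial direction is the Kirszbraun–Valentine extension theorem). -/
theorem lipschitz_interpolation
    {H : Type*} [NormedAddCommGroup H] [InnerProductSpace ℝ H] [CompleteSpace H]
    (L : ℝ) (hL : 0 < L) {J : Type*} (y u : J → H) :
    (∃ G : H → H, (∀ x z : H, ‖G x - G z‖ ≤ L * ‖x - z‖) ∧ ∀ i, G (y i) = u i) ↔
    (∀ i j, ‖u i - u j‖ ≤ L * ‖y i - y j‖) := by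
  constructor
  · rintro ⟨G, hG, hGy⟩ i j
    simpa only [hGy] using hG (y i) (y j)
  · intro h
    obtain ⟨G, hG, hGy⟩ := IsLipschitzGraph.exists_lipschitz_extension hL.le
      (M := range fun i => (y i, u i)) (by rintro _ ⟨i, rfl⟩ _ ⟨j, rfl⟩; exact h i j)
    exact ⟨G, hG, fun i => hGy _ ⟨i, rfl⟩⟩
end
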